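/- arXiv:1206.4926 — 5 statements merged into one kernel-verified Lean document; each statement's English description precedes it below -/
import Mathlib

section
/- Let F be a finitely generated free group, let φ : F → F be a group endomorphism, and let H be a finite-index subgroup of F that is invariant under φ (i.e., φ(H) ⊆ H). Then every nonzero eigenvalue of φ is a nonzero eigenvalue of the restriction φ|_H; that is, Λ(φ) ⊆ Λ(φ|_H). -/
/-!
The inclusion `H ≤ F` induces a linear map `ℂ ⊗ H^ab → ℂ ⊗ F^ab` intertwining `φ|_H` with `φ`.
It is surjective because every `g ∈ F` has a power `g ^ n ∈ H` with `n ≠ 0`, and `n` is invertible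
in `ℂ`. So `φ` acts on a quotient of the finite-dimensional space on which `φ|_H` acts, and an
eigenvalue on a quotient is an eigenvalue upstairs: if `φ|_H - μ` is injective, it is surjective,
hence so is `φ - μ`, which is then injective too.
-/

open scoped TensorProduct

/-- The complex linear endomorphism of `(G/[G,G]) ⊗_ℤ ℂ` induced by a group
endomorphism `φ : G →* G`. -/
noncomputable def inducedEnd {G : Type*} [Group G] (φ : G →* G) :
    Module.End ℂ (ℂ ⊗[ℤ] Additive (Abelianization G)) :=
  ((MonoidHom.toAdditive (Abelianization.map φ)).toIntLinearMap).baseChange ℂ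

/-- `Λ(φ)`: the set of nonzero eigenvalues of the induced map on
`(G/[G,G]) ⊗_ℤ ℂ`. -/
noncomputable def specNZ {G : Type*} [Group G] (φ : G →* G) : Set ℂ :=
  {μ : ℂ | μ ≠ 0 ∧ Module.End.HasEigenvalue (inducedEnd φ) μ}

/-- The restriction of an endomorphism `φ` to a `φ`-invariant subgroup `H`,
as an endomorphism of `H`. -/
def restrictHom {G : Type*} [Group G] (φ : G →* G) (H : Subgroup G)
    (hinv : ∀ x ∈ H, φ x ∈ H) : H →* H :=
  (φ.domRestrict H).codRestrict H fun x => hinv x x.2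

namespace Module.End

theorem HasEigenvalue.of_surjective_intertwining {K V W : Type*} [Field K] [AddCommGroup V]
    [Module K V] [FiniteDimensional K V] [AddCommGroup W] [Module K W] {f : V →ₗ[K] W}
    (hf : Function.Surjective f) {a : End K V} {b : End K W} (hab : b ∘ₗ f = f ∘ₗ a) {μ : K}
    (hμ : b.HasEigenvalue μ) : a.HasEigenvalue μ := by
  have : FiniteDimensional K W := Module.Finite.of_surjective f hf
  have hshift : (b - μ • 1) ∘ₗ f = f ∘ₗ (a - μ • 1) := by
    rw [LinearMap.sub_comp, LinearMap.comp_sub, hab, LinearMap.smul_comp, LinearMap.comp_smul,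
      one_eq_id, one_eq_id, LinearMap.id_comp, LinearMap.comp_id]
  contrapose! hμ
  rw [hasEigenvalue_iff, not_not, eigenspace_def, LinearMap.ker_eq_bot] at hμ ⊢
  have ha_surj : Function.Surjective (a - μ • (1 : End K V)) :=
    LinearMap.injective_iff_surjective.mp hμ
  have hb_surj : Function.Surjective (b - μ • (1 : End K W)) := by
    refine Function.Surjective.of_comp (g := f) ?_
    rw [← LinearMap.coe_comp, hshift, LinearMap.coe_comp]
    exact hf.comp ha_surj
  exact LinearMap.injective_iff_surjective.mpr hb_surj

end Module.End

theorem LinearMap.baseChange_surjective_of_exists_nsmul_mem_range {K M N : Type*} [Field K]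
    [CharZero K] [AddCommGroup M] [AddCommGroup N] (f : M →ₗ[ℤ] N)
    (h : ∀ y, ∃ n : ℕ, n ≠ 0 ∧ n • y ∈ LinearMap.range f) :
    Function.Surjective (f.baseChange K) := by
  rw [← LinearMap.range_eq_top, eq_top_iff]
  rintro v -
  induction v using TensorProduct.induction_on with
  | zero => exact zero_mem _
  | add v w hv hw => exact add_mem hv hw
  | tmul c y =>
    obtain ⟨n, hn, x, hx⟩ := h y
    refine ⟨(c / n) ⊗ₜ x, ?_⟩
    rw [LinearMap.baseChange_tmul, hx, TensorProduct.tmul_smul, TensorProduct.smul_tmul',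
      nsmul_eq_mul, mul_div_cancel₀ c (Nat.cast_ne_zero.mpr hn)]

noncomputable def complexAbelianizationMap {G G' : Type*} [Group G] [Group G'] (f : G →* G') :
    ℂ ⊗[ℤ] Additive (Abelianization G) →ₗ[ℂ] ℂ ⊗[ℤ] Additive (Abelianization G') :=
  (MonoidHom.toAdditive (Abelianization.map f)).toIntLinearMap.baseChange ℂ

theorem complexAbelianizationMap_comp {G G' G'' : Type*} [Group G] [Group G'] [Group G'']
    (g : G' →* G'') (f : G →* G') :
    complexAbelianizationMap (g.comp f) =
      complexAbelianizationMap g ∘ₗ complexAbelianizationMap f := by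
  rw [complexAbelianizationMap, complexAbelianizationMap, complexAbelianizationMap,
    ← LinearMap.baseChange_comp, ← Abelianization.map_comp]
  rfl

theorem inducedEnd_comp_complexAbelianizationMap {G G' : Type*} [Group G] [Group G']
    {f : G →* G'} {ψ : G →* G} {φ : G' →* G'} (h : φ.comp f = f.comp ψ) :
    inducedEnd φ ∘ₗ complexAbelianizationMap f = complexAbelianizationMap f ∘ₗ inducedEnd ψ := by
  change complexAbelianizationMap φ ∘ₗ _ = _ ∘ₗ complexAbelianizationMap ψ
  rw [← complexAbelianizationMap_comp, ← complexAbelianizationMap_comp, h]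

theorem Subgroup.complexAbelianizationMap_subtype_surjective {G : Type*} [Group G]
    (H : Subgroup G) [H.FiniteIndex] :
    Function.Surjective (complexAbelianizationMap H.subtype) := by
  refine LinearMap.baseChange_surjective_of_exists_nsmul_mem_range _ fun y ↦ ?_
  obtain ⟨g, rfl⟩ := QuotientGroup.mk'_surjective _ y
  obtain ⟨n, hn, -, hg⟩ := H.exists_pow_mem_of_index_ne_zero FiniteIndex.index_ne_zero g
  exact ⟨n, hn.ne', Additive.ofMul (Abelianization.of ⟨g ^ n, hg⟩), rfl⟩

instance Abelianization.instFiniteComplexTensor {G : Type*} [Group G] [Group.FG G] :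
    Module.Finite ℂ (ℂ ⊗[ℤ] Additive (Abelianization G)) :=
  have : Group.FG (Abelianization G) := QuotientGroup.fg _
  have : Module.Finite ℤ (Additive (Abelianization G)) :=
    Module.Finite.iff_addGroup_fg.mpr inferInstance
  inferInstance

theorem eigenvalues_subset_of_finiteIndex_invariant_general
    {F : Type*} [Group F] [Group.FG F]
    (φ : F →* F) (H : Subgroup F) [H.FiniteIndex]
    (hinv : ∀ x ∈ H, φ x ∈ H) :
    specNZ φ ⊆ specNZ (restrictHom φ H hinv) := by
  rintro μ ⟨hμ0, hμ⟩
  refine ⟨hμ0, hμ.of_surjective_intertwining H.complexAbelianizationMap_subtype_surjective ?_⟩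
  exact inducedEnd_comp_complexAbelianizationMap rfl

theorem eigenvalues_subset_of_finiteIndex_invariant
    {F : Type*} [Group F] [IsFreeGroup F] [Group.FG F]
    (φ : F →* F) (H : Subgroup F) [H.FiniteIndex]
    (hinv : ∀ x ∈ H, φ x ∈ H) :
    specNZ φ ⊆ specNZ (restrictHom φ H hinv) :=
  eigenvalues_subset_of_finiteIndex_invariant_general φ H hinv
end

section
/- Let F be a finitely generated free group and let φ : F → F be a group endomorphism. Then there exists a positive integer k such that ker(φ^k) = ker(φ^n) for every n ≥ k; that is, the increasing sequence of subgroups ker φ ⊆ ker φ² ⊆ ker φ³ ⊆ ⋯ stabilizes. -/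
/-!
The images `φⁿ(F)` are finitely generated free groups (Nielsen–Schreier), and `φ` maps `φⁿ(F)`
onto `φⁿ⁺¹(F)`, so their ranks form a non-increasing sequence of natural numbers. Where the rank
stops dropping, `φ : φᵏ(F) → φᵏ⁺¹(F)` is a surjection between free groups of the same finite rank,
hence an isomorphism, because finitely generated free groups are residually finite and therefore
Hopfian. Injectivity of `φ` on `φᵏ(F)` says exactly `ker φᵏ⁺¹ = ker φᵏ`, and a chain of iterated
kernels that is constant for one step is constant from then on.
-/

/-- The `n`-fold composition of an endomorphism `φ` with itself. -/
def iterateHom {G : Type*} [Group G] (φ : G →* G) : ℕ → (G →* G)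
  | 0 => MonoidHom.id G
  | n + 1 => φ.comp (iterateHom φ n)

open Function

theorem Equiv.Perm.exists_apply_eq_of_injOn {α β : Type*} [Finite α] {I : Set β} {s t : β → α}
    (hs : Set.InjOn s I) (ht : Set.InjOn t I) : ∃ σ : Equiv.Perm α, ∀ i ∈ I, σ (s i) = t i := by
  classical
  cases nonempty_fintype α
  rcases isEmpty_or_nonempty β with hβ | hβ
  · exact ⟨1, fun i => isEmptyElim i⟩
  have hsI : ∀ i ∈ I, invFunOn s I (s i) = i := fun i hi => hs.leftInvOn_invFunOn hi
  obtain ⟨g, hg⟩ := Set.MapsTo.exists_equiv_extend_of_card_eq (t := Finset.univ)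
    Finset.card_univ.symm (s := s '' I) (f := t ∘ invFunOn s I)
    (fun _ _ => Finset.mem_coe.2 (Finset.mem_univ _)) <| by
      rintro _ ⟨i, hi, rfl⟩ _ ⟨j, hj, rfl⟩ h
      simp only [comp_apply, hsI i hi, hsI j hj] at h
      rw [ht hi hj h]
  exact ⟨g.trans (Equiv.subtypeUnivEquiv Finset.mem_univ), fun i hi => by
    simpa [hsI i hi] using hg (s i) ⟨i, hi, rfl⟩⟩

namespace FreeGroup
variable {ι α : Type*}

theorem lift_mk_apply_last (σ : ι → Equiv.Perm α) (L : List (ι × Bool))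
    (p : Fin (L.length + 1) → α)
    (hp : ∀ i : Fin L.length, cond L[i].2 (σ L[i].1) (σ L[i].1)⁻¹ (p i.succ) = p i.castSucc) :
    lift σ (mk L) (p (Fin.last _)) = p 0 := by
  rw [lift_mk]
  induction L with
  | nil => rfl
  | cons x L ih =>
    rw [List.map_cons, List.prod_cons, Equiv.Perm.mul_apply]
    exact (congrArg _ (ih (p ∘ Fin.succ) fun i => hp i.succ)).trans (hp 0)

theorem IsReduced.injOn_add_toNat {L : List (ι × Bool)} (hL : IsReduced L) (a : ι) (c : Bool) :
    Set.InjOn (fun i : Fin L.length => (i : ℕ) + (L[i].2 == c).toNat) {i | L[i].1 = a} := by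
  have adjacent : ∀ i j : Fin L.length, L[i].1 = a → L[j].1 = a → (i : ℕ) + 1 = j →
      L[i].2 = L[j].2 := by
    rintro i ⟨j, hj⟩ hi hj' rfl
    exact List.IsChain.getElem hL i hj (hi.trans hj'.symm)
  -- Two letters with the same image are adjacent and of the form `(a, b), (a, !b)`.
  intro i hi j hj h
  have hij := adjacent i j hi hj
  have hji := adjacent j i hj hi
  simp only at h
  apply Fin.ext
  cases hbi : L[i].2 <;> cases hbj : L[j].2 <;> cases c <;>
    simp only [hbi, hbj] at h hij hji <;> simp at h hij hji <;> omega

theorem exists_finite_hom_ne_one {w : FreeGroup ι} (hw : w ≠ 1) :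
    ∃ (Q : Type) (_ : Group Q) (_ : Finite Q) (ψ : FreeGroup ι →* Q), ψ w ≠ 1 := by
  classical
  -- On the positions `0, …, |w|`, the letter `(a, true)` at index `i` moves `i + 1` to `i` and
  -- `(a, false)` moves `i` to `i + 1`; so `w` moves `|w|` to `0`.
  set L := w.toWord
  let shift (c : Bool) (i : Fin L.length) : Fin (L.length + 1) :=
    ⟨i + (L[i].2 == c).toNat, by have := i.isLt; have := Bool.toNat_le (L[i].2 == c); omega⟩
  have hL : IsReduced L := isReduced_toWord
  choose σ hσ using fun a => Equiv.Perm.exists_apply_eq_of_injOn (s := shift true)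
    (t := shift false) ((hL.injOn_add_toNat a true).of_comp (g := Fin.val))
    ((hL.injOn_add_toNat a false).of_comp (g := Fin.val))
  refine ⟨_, _, inferInstance, lift σ, fun h => ?_⟩
  have := lift_mk_apply_last σ L id fun i => ?_
  · rw [mk_toWord, h] at this
    exact hw (toWord_eq_nil_iff.1 (List.length_eq_zero_iff.1 (congrArg Fin.val this)))
  · have hi := hσ L[i].1 i rfl
    cases hb : L[i].2 <;> simp only [shift, hb] at hi
    · exact Equiv.Perm.inv_eq_iff_eq.2 hi.symm
    · exact hi

end FreeGroup

open Group in
instance IsFreeGroup.residuallyFinite {G : Type*} [Group G] [IsFreeGroup G] : ResiduallyFinite G :=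
  residuallyFinite_of_forall_exists_finite_monoidHom fun g hg => by
    obtain ⟨Q, _, _, ψ, hψ⟩ := FreeGroup.exists_finite_hom_ne_one
      ((map_ne_one_iff _ (IsFreeGroup.toFreeGroup G).injective).2 hg)
    exact ⟨Q, _, inferInstance, ψ.comp (IsFreeGroup.toFreeGroup G).toMonoidHom, hψ⟩

instance MonoidHom.finite_of_fg {G Q : Type*} [Group G] [Group Q] [Group.FG G] [Finite Q] :
    Finite (G →* Q) := by
  obtain ⟨S, hS⟩ := Group.fg_def.1 ‹_›
  refine Finite.of_injective (fun χ : G →* Q => fun s : S => χ s) fun χ₁ χ₂ h => ?_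
  exact MonoidHom.eq_of_eqOn_dense hS fun s hs => congrFun h ⟨s, hs⟩

theorem Group.ResiduallyFinite.injective_of_surjective {G : Type*} [Group G] [Group.FG G]
    [Group.ResiduallyFinite G] {f : G →* G} (hf : Surjective f) :
    Injective f := by
  refine (injective_iff_map_eq_one f).2 fun g hg => by_contra fun hg1 => ?_
  obtain ⟨H, hgH⟩ := Group.exists_finiteIndexNormalSubgroup_notMem g hg1
  -- Precomposition with `f` is injective on the finite set `G →* G ⧸ H`, hence surjective.
  have hcomp : Injective fun χ : G →* G ⧸ H.toSubgroup => χ.comp f :=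
    fun _ _ h => (MonoidHom.cancel_right hf).1 h
  obtain ⟨χ, hχ⟩ := Finite.surjective_of_injective hcomp (QuotientGroup.mk' H.toSubgroup)
  have : (g : G ⧸ H.toSubgroup) = 1 := by
    rw [← QuotientGroup.mk'_apply, ← hχ, MonoidHom.comp_apply, hg, map_one]
  exact hgH ((QuotientGroup.eq_one_iff g).1 this)

open Cardinal in
theorem FreeGroup.cardinal_mk_le_card_of_closure_eq_top {ι : Type*} {S : Finset (FreeGroup ι)}
    (hS : Subgroup.closure (S : Set (FreeGroup ι)) = ⊤) : #ι ≤ S.card := by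
  classical
  let ab : FreeGroup ι →* Multiplicative (FreeAbelianGroup ι) := Abelianization.of
  let T : Set (FreeAbelianGroup ι) := S.image (fun x => (ab x).toAdd)
  have hspan : Submodule.span ℤ T = ⊤ := by
    refine Submodule.eq_top_iff'.2 fun y => ?_
    obtain ⟨x, rfl⟩ := QuotientGroup.mk'_surjective _ (Multiplicative.ofAdd y)
    induction (hS ▸ Subgroup.mem_top x : x ∈ Subgroup.closure (S : Set (FreeGroup ι))) using
      Subgroup.closure_induction with
    | mem x hx => exact Submodule.subset_span (Finset.mem_image_of_mem _ hx)
    | one => exact Submodule.zero_mem _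
    | mul x y _ _ hx hy => exact Submodule.add_mem _ hx hy
    | inv x _ hx => exact Submodule.neg_mem _ hx
  calc #ι ≤ Fintype.card T := basis_le_span' (FreeAbelianGroup.basis ι) hspan
    _ ≤ S.card := by simp [T, Finset.card_image_le]

namespace FreeGroup

variable {ι : Type*}

theorem finite_of_fg [Group.FG (FreeGroup ι)] : Finite ι := by
  obtain ⟨S, -, hS⟩ := Group.rank_spec (FreeGroup ι)
  exact Cardinal.lt_aleph0_iff_finite.1
    ((cardinal_mk_le_card_of_closure_eq_top hS).trans_lt Cardinal.natCast_lt_aleph0)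

theorem rank_eq_natCard [Group.FG (FreeGroup ι)] : Group.rank (FreeGroup ι) = Nat.card ι := by
  classical
  have := finite_of_fg (ι := ι)
  cases nonempty_fintype ι
  refine le_antisymm ?_ ?_
  · calc Group.rank (FreeGroup ι) ≤ (Finset.univ.image (of (α := ι))).card :=
          Group.rank_le (by simp)
      _ ≤ Nat.card ι := Finset.card_image_le.trans_eq (Nat.card_eq_fintype_card).symm
  · obtain ⟨S, hSrank, hS⟩ := Group.rank_spec (FreeGroup ι)
    rw [← hSrank, ← Nat.cast_le (α := Cardinal), Nat.cast_card]
    exact cardinal_mk_le_card_of_closure_eq_top hS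

end FreeGroup

namespace IsFreeGroup

variable {G H : Type*} [Group G] [Group H] [IsFreeGroup G] [IsFreeGroup H] [Group.FG G] [Group.FG H]

instance fg_freeGroup_generators : Group.FG (FreeGroup (Generators G)) :=
  Group.fg_of_surjective (f := (toFreeGroup G).toMonoidHom) (toFreeGroup G).surjective

theorem finite_generators : Finite (Generators G) :=
  FreeGroup.finite_of_fg

theorem rank_eq_natCard_generators : Group.rank G = Nat.card (Generators G) :=
  (Group.rank_congr (toFreeGroup G)).trans FreeGroup.rank_eq_natCard

theorem nonempty_mulEquiv_of_rank_eq (h : Group.rank G = Group.rank H) : Nonempty (G ≃* H) := by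
  have := finite_generators (G := G)
  have := finite_generators (G := H)
  rw [rank_eq_natCard_generators, rank_eq_natCard_generators] at h
  obtain ⟨e⟩ := Finite.card_eq.1 h
  exact ⟨(toFreeGroup G).trans ((FreeGroup.freeGroupCongr e).trans (toFreeGroup H).symm)⟩

theorem injective_of_surjective_of_rank_eq {f : G →* H} (hf : Surjective f)
    (h : Group.rank G = Group.rank H) : Injective f := by
  obtain ⟨e⟩ := nonempty_mulEquiv_of_rank_eq h
  exact .of_comp (f := e.symm) (Group.ResiduallyFinite.injective_of_surjective
    (f := e.symm.toMonoidHom.comp f) (e.symm.surjective.comp hf))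

end IsFreeGroup

section iterateHom

variable {G : Type*} [Group G] (φ : G →* G)

theorem iterateHom_apply (n : ℕ) (x : G) : iterateHom φ n x = φ^[n] x := by
  induction n with
  | zero => rfl
  | succ n ih => exact (congrArg φ ih).trans (iterate_succ_apply' φ n x).symm

theorem mem_ker_iterateHom {n : ℕ} {x : G} : x ∈ (iterateHom φ n).ker ↔ φ^[n] x = 1 := by
  rw [MonoidHom.mem_ker, iterateHom_apply]

theorem ker_iterateHom_eq_of_succ_eq {k : ℕ}
    (h : (iterateHom φ (k + 1)).ker = (iterateHom φ k).ker) {n : ℕ} (hn : k ≤ n) :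
    (iterateHom φ n).ker = (iterateHom φ k).ker := by
  obtain ⟨m, rfl⟩ := Nat.exists_eq_add_of_le hn
  induction m with
  | zero => rfl
  | succ m ih =>
    ext x
    have hstep := SetLike.ext_iff.1 h (φ^[m] x)
    rw [mem_ker_iterateHom, mem_ker_iterateHom, ← iterate_add_apply,
      ← iterate_add_apply] at hstep
    rw [← ih (by omega), mem_ker_iterateHom, mem_ker_iterateHom, ← hstep, Nat.add_comm m 1,
      Nat.add_assoc]

theorem range_iterateHom_succ (n : ℕ) :
    (iterateHom φ (n + 1)).range = (φ.comp (iterateHom φ n).range.subtype).range := by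
  rw [MonoidHom.range_comp, Subgroup.range_subtype]
  exact MonoidHom.range_comp φ (iterateHom φ n)

variable [Group.FG G]

theorem rank_range_iterateHom_succ_le (n : ℕ) :
    Group.rank (iterateHom φ (n + 1)).range ≤ Group.rank (iterateHom φ n).range :=
  (Subgroup.rank_congr (range_iterateHom_succ φ n)).trans_le Group.rank_range_le

theorem ker_iterateHom_succ_eq_of_rank_eq [IsFreeGroup G] {k : ℕ}
    (h : Group.rank (iterateHom φ (k + 1)).range = Group.rank (iterateHom φ k).range) :
    (iterateHom φ (k + 1)).ker = (iterateHom φ k).ker := by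
  set ψ := φ.comp (iterateHom φ k).range.subtype
  have hψ : Injective ψ := MonoidHom.rangeRestrict_injective_iff.1 <|
    IsFreeGroup.injective_of_surjective_of_rank_eq ψ.rangeRestrict_surjective <| by
      rw [← Subgroup.rank_congr (range_iterateHom_succ φ k), h]
  ext x
  refine ⟨fun hx => ?_, fun hx => ?_⟩
  · have : (⟨_, x, rfl⟩ : (iterateHom φ k).range) = 1 := hψ (hx.trans (map_one ψ).symm)
    exact congrArg Subtype.val this
  · exact (congrArg φ hx).trans (map_one φ)

end iterateHom

theorem kernels_stabilize
    {F : Type*} [Group F] [IsFreeGroup F] [Group.FG F] (φ : F →* F) :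
    ∃ k : ℕ, 0 < k ∧ ∀ n : ℕ, k ≤ n → (iterateHom φ n).ker = (iterateHom φ k).ker := by
  let r n := Group.rank (iterateHom φ n).range
  set k := Function.argmin r + 1
  have hk : r (k + 1) = r k := le_antisymm (rank_range_iterateHom_succ_le φ k)
    ((rank_range_iterateHom_succ_le φ _).trans (Function.argmin_le r (k + 1)))
  exact ⟨k, Nat.succ_pos _, fun n =>
    ker_iterateHom_eq_of_succ_eq φ (ker_iterateHom_succ_eq_of_rank_eq φ hk)⟩
end

section
/- Let F be a finitely generated free group, let φ : F → F be a group endomorphism, let K be the eventual kernel of φ, and let φ̄ : F/K → F/K be the induced endomorphism. Then the sets of nonzero eigenvalues coincide: Λ(φ̄) = Λ(φ). -/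
open scoped TensorProduct

noncomputable def lmap {G H : Type*} [Group G] [Group H] (f : G →* H) :
    (ℂ ⊗[ℤ] Additive (Abelianization G)) →ₗ[ℂ] (ℂ ⊗[ℤ] Additive (Abelianization H)) :=
  ((MonoidHom.toAdditive (Abelianization.map f)).toIntLinearMap).baseChange ℂ

lemma lmap_comp {G H I : Type*} [Group G] [Group H] [Group I] (f : G →* H) (g : H →* I) :
    lmap (g.comp f) = (lmap g).comp (lmap f) := by
  unfold lmap
  rw [← LinearMap.baseChange_comp]
  congr 1
  ext x
  exact congrArg Additive.ofMul (Abelianization.map_map_apply (f := f) (g := g) (x := x.toMul)).symm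

lemma lmap_id {G : Type*} [Group G] : lmap (MonoidHom.id G) = LinearMap.id := by
  unfold lmap
  rw [← LinearMap.baseChange_id (R := ℤ) (A := ℂ)]
  congr 1
  ext x
  simp

lemma lmap_congr {G H : Type*} [Group G] [Group H] {f g : G →* H} (h : ∀ x, f x = g x) :
    lmap f = lmap g := by
  rw [MonoidHom.ext h]

lemma inducedEnd_eq_lmap {G : Type*} [Group G] (φ : G →* G) :
    (inducedEnd φ : _ →ₗ[ℂ] _) = lmap φ := rfl

lemma inducedEnd_pow {G : Type*} [Group G] (φ : G →* G) (n : ℕ) :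
    ((inducedEnd φ ^ n : Module.End ℂ _) : _ →ₗ[ℂ] _) = lmap (iterateHom φ n) := by
  induction n with
  | zero => simp [iterateHom, lmap_id, Module.End.one_eq_id]
  | succ n ih =>
    rw [pow_succ']
    show (inducedEnd φ : _ →ₗ[ℂ] _).comp (inducedEnd φ ^ n : Module.End ℂ _) = _
    rw [ih, inducedEnd_eq_lmap, iterateHom, lmap_comp]

lemma iterateHom_comm {G : Type*} [Group G] (φ : G →* G) (n : ℕ) (g : G) :
    φ (iterateHom φ n g) = iterateHom φ n (φ g) := by
  induction n with
  | zero => rfl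
  | succ n ih => simp [iterateHom, ih]

theorem specNZ_eventual_kernel_quotient
    {F : Type*} [Group F] [IsFreeGroup F] [Group.FG F] (φ : F →* F)
    (k : ℕ) (hk : 0 < k)
    (hstab : ∀ n : ℕ, k ≤ n → (iterateHom φ n).ker = (iterateHom φ k).ker)
    (φbar : F ⧸ (iterateHom φ k).ker →* F ⧸ (iterateHom φ k).ker)
    (hbar : ∀ g : F, φbar (QuotientGroup.mk g) = QuotientGroup.mk (φ g)) :
    specNZ φbar = specNZ φ := by
  set K := (iterateHom φ k).ker with hK
  -- the section-like hom σ : F/K →* F with σ (mk g) = φ^k g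
  let σ : F ⧸ K →* F := QuotientGroup.lift K (iterateHom φ k) (fun x hx => hx)
  have hσ : ∀ g : F, σ (QuotientGroup.mk g) = iterateHom φ k g := fun g => rfl
  set P := lmap (QuotientGroup.mk' K) with hP
  set S := lmap σ with hS
  set A := inducedEnd φ with hA
  set B := inducedEnd φbar with hB
  -- iterates of φbar
  have hbar_iter : ∀ n (g : F), iterateHom φbar n (QuotientGroup.mk g)
      = QuotientGroup.mk (iterateHom φ n g) := by
    intro n
    induction n with
    | zero => intro g; rfl
    | succ n ih => intro g; simp [iterateHom, ih, hbar]
  have e1 : S.comp P = ((A ^ k : Module.End ℂ _) : _ →ₗ[ℂ] _) := by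
    rw [inducedEnd_pow, hS, hP, ← lmap_comp]
    exact lmap_congr (fun g => rfl)
  have e2 : (B : _ →ₗ[ℂ] _).comp P = P.comp A := by
    rw [hB, inducedEnd_eq_lmap, hP, hA, inducedEnd_eq_lmap, ← lmap_comp, ← lmap_comp]
    exact lmap_congr (fun g => hbar g)
  have e3 : (A : _ →ₗ[ℂ] _).comp S = S.comp B := by
    rw [hA, inducedEnd_eq_lmap, hB, inducedEnd_eq_lmap, hS, ← lmap_comp, ← lmap_comp]
    refine lmap_congr (fun x => ?_)
    induction x using QuotientGroup.induction_on with
    | _ g =>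
      show φ (σ (QuotientGroup.mk g)) = σ (φbar (QuotientGroup.mk g))
      rw [hσ, hbar, hσ, iterateHom_comm]
  have e4 : P.comp S = ((B ^ k : Module.End ℂ _) : _ →ₗ[ℂ] _) := by
    rw [inducedEnd_pow, hP, hS, ← lmap_comp]
    refine lmap_congr (fun x => ?_)
    induction x using QuotientGroup.induction_on with
    | _ g =>
      show QuotientGroup.mk (σ (QuotientGroup.mk g)) = iterateHom φbar k (QuotientGroup.mk g)
      rw [hσ, hbar_iter]
  ext μ
  constructor
  · rintro ⟨hμ, hev⟩
    obtain ⟨w, hw⟩ := hev.exists_hasEigenvector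
    refine ⟨hμ, Module.End.hasEigenvalue_of_hasEigenvector
      (x := S w) (Module.End.hasEigenvector_iff.mpr ⟨?_, ?_⟩)⟩
    · rw [Module.End.mem_eigenspace_iff]
      have : A (S w) = S (B w) := by
        have := congrArg (fun L : _ →ₗ[ℂ] _ => L w) e3
        simpa using this
      rw [this, hw.apply_eq_smul, map_smul]
    · intro h0
      have : P (S w) = (μ ^ k) • w := by
        have := congrArg (fun L : _ →ₗ[ℂ] _ => L w) e4
        simp only [LinearMap.comp_apply] at this
        rw [this]
        exact hw.pow_apply k
      rw [h0, map_zero] at this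
      exact smul_ne_zero (pow_ne_zero k hμ) hw.2 this.symm
  · rintro ⟨hμ, hev⟩
    obtain ⟨v, hv⟩ := hev.exists_hasEigenvector
    refine ⟨hμ, Module.End.hasEigenvalue_of_hasEigenvector
      (x := P v) (Module.End.hasEigenvector_iff.mpr ⟨?_, ?_⟩)⟩
    · rw [Module.End.mem_eigenspace_iff]
      have : B (P v) = P (A v) := by
        have := congrArg (fun L : _ →ₗ[ℂ] _ => L v) e2
        simpa using this
      rw [this, hv.apply_eq_smul, map_smul]
    · intro h0
      have : S (P v) = (μ ^ k) • v := by
        have := congrArg (fun L : _ →ₗ[ℂ] _ => L v) e1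
        simp only [LinearMap.comp_apply] at this
        rw [this]
        exact hv.pow_apply k
      rw [h0, map_zero] at this
      exact smul_ne_zero (pow_ne_zero k hμ) hv.2 this.symm
end

section
/- Let F be a finitely generated free group and let φ : F → F be an automorphism that has an eigenvalue λ (a nonzero eigenvalue of the induced map on (F/[F,F]) ⊗_ℤ ℂ) which is not a root of unity. Then for every finite-index subgroup H of F with φ(H) ⊆ H, the restriction φ|_H has an eigenvalue that is not a root of unity; in particular there is no finite-index φ-invariant subgroup H of F such that every eigenvalue of φ|_H is a root of unity. -/
/-! The inclusion `H ≤ F` induces a map `(H/[H,H]) ⊗ ℂ → (F/[F,F]) ⊗ ℂ` intertwining `φ|_H`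
with `φ`. It is surjective because `a ^ [F : H]` lies in the image of `H` for every `a` in the
abelianization of `F`, and the index is invertible in `ℂ`. An eigenvalue of an operator on a
quotient of a finite-dimensional space is an eigenvalue of the operator itself, so
`Λ(φ) ⊆ Λ(φ|_H)` and `lam` itself is the required eigenvalue. -/

open scoped TensorProduct

/-- A complex number is a root of unity if some positive power of it equals `1`. -/
def IsRootOfUnity (z : ℂ) : Prop := ∃ n : ℕ, 0 < n ∧ z ^ n = 1

theorem Module.End.HasEigenvalue.of_surjective_comp_eq {K V W : Type*} [Field K]
    [AddCommGroup V] [Module K V] [AddCommGroup W] [Module K W] [FiniteDimensional K V]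
    {π : V →ₗ[K] W} (hπ : Function.Surjective π) {T : Module.End K V} {S : Module.End K W}
    (h : π ∘ₗ T = S ∘ₗ π) {μ : K} (hS : S.HasEigenvalue μ) : T.HasEigenvalue μ := by
  have : FiniteDimensional K W := .of_surjective π hπ
  rw [Module.End.hasEigenvalue_iff_mem_spectrum] at hS ⊢
  contrapose! hS
  rw [spectrum.notMem_iff, LinearMap.isUnit_iff_range_eq_top] at hS ⊢
  have hcomm : π ∘ₗ (algebraMap K _ μ - T) = (algebraMap K _ μ - S) ∘ₗ π := by
    simp only [LinearMap.comp_sub, LinearMap.sub_comp, h, Module.algebraMap_end_eq_smul_id,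
      LinearMap.comp_smul, LinearMap.smul_comp, LinearMap.comp_id, LinearMap.id_comp]
  rw [← LinearMap.range_comp_of_range_eq_top _ (LinearMap.range_eq_top.2 hπ), ← hcomm,
    LinearMap.range_comp_of_range_eq_top _ hS, LinearMap.range_eq_top.2 hπ]

theorem LinearMap.baseChange_surjective_of_zsmul_mem_range {K M N : Type*} [Field K] [CharZero K]
    [AddCommGroup M] [AddCommGroup N] (f : M →ₗ[ℤ] N) {n : ℤ} (hn : n ≠ 0)
    (hf : ∀ m, n • m ∈ LinearMap.range f) : Function.Surjective (f.baseChange K) := by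
  rw [← LinearMap.range_eq_top, eq_top_iff]
  rintro x -
  induction x with
  | zero => exact Submodule.zero_mem _
  | add a b ha hb => exact Submodule.add_mem _ ha hb
  | tmul z m =>
    obtain ⟨y, hy⟩ := hf m
    refine ⟨((n : K)⁻¹ * z) ⊗ₜ y, ?_⟩
    rw [LinearMap.baseChange_tmul, hy, ← TensorProduct.smul_tmul, zsmul_eq_mul,
      mul_inv_cancel_left₀ (Int.cast_ne_zero.2 hn)]

theorem Abelianization.pow_index_mem_range_map_subtype {G : Type*} [Group G] (H : Subgroup G)
    (a : Abelianization G) : a ^ H.index ∈ (Abelianization.map H.subtype).range := by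
  have hle : H.map of ≤ (map H.subtype).range := by
    rintro _ ⟨g, hg, rfl⟩
    exact ⟨of ⟨g, hg⟩, map_of _ _⟩
  obtain ⟨c, hc⟩ := H.index_map_dvd (f := of) QuotientGroup.mk_surjective
  rw [hc, pow_mul]
  exact hle (Subgroup.pow_mem _ ((H.map of).pow_index_mem a) c)

instance {G : Type*} [Group G] [Group.FG G] : Module.Finite ℤ (Additive (Abelianization G)) :=
  Module.Finite.iff_addGroup_fg.2 <|
    GroupFG.iff_add_fg.1 <|
      Group.fg_of_surjective (f := Abelianization.of) QuotientGroup.mk_surjective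

noncomputable def inducedMap {G G' : Type*} [Group G] [Group G'] (f : G →* G') :
    ℂ ⊗[ℤ] Additive (Abelianization G) →ₗ[ℂ] ℂ ⊗[ℤ] Additive (Abelianization G') :=
  ((MonoidHom.toAdditive (Abelianization.map f)).toIntLinearMap).baseChange ℂ

theorem inducedEnd_eq_inducedMap {G : Type*} [Group G] (φ : G →* G) :
    inducedEnd φ = inducedMap φ := rfl

theorem inducedMap_comp {G G' G'' : Type*} [Group G] [Group G'] [Group G''] (g : G' →* G'')
    (f : G →* G') : inducedMap (g.comp f) = inducedMap g ∘ₗ inducedMap f := by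
  rw [inducedMap, inducedMap, inducedMap, ← LinearMap.baseChange_comp, ← Abelianization.map_comp]
  rfl

theorem inducedMap_subtype_surjective {G : Type*} [Group G] (H : Subgroup G) [H.FiniteIndex] :
    Function.Surjective (inducedMap H.subtype) := by
  refine LinearMap.baseChange_surjective_of_zsmul_mem_range _
    (Int.natCast_ne_zero.2 (Subgroup.FiniteIndex.index_ne_zero (H := H))) fun m => ?_
  obtain ⟨b, hb⟩ := Abelianization.pow_index_mem_range_map_subtype H m.toMul
  exact ⟨Additive.ofMul b, by rw [natCast_zsmul]; exact congrArg Additive.ofMul hb⟩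

theorem hasEigenvalue_inducedEnd_restrictHom {G : Type*} [Group G] [Group.FG G] (φ : G →* G)
    (H : Subgroup G) [H.FiniteIndex] (hinv : ∀ x ∈ H, φ x ∈ H) {μ : ℂ}
    (h : (inducedEnd φ).HasEigenvalue μ) :
    (inducedEnd (restrictHom φ H hinv)).HasEigenvalue μ := by
  refine h.of_surjective_comp_eq (inducedMap_subtype_surjective H) ?_
  rw [inducedEnd_eq_inducedMap, inducedEnd_eq_inducedMap, ← inducedMap_comp, ← inducedMap_comp]
  rfl

theorem specNZ_subset_specNZ_restrictHom {G : Type*} [Group G] [Group.FG G] (φ : G →* G)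
    (H : Subgroup G) [H.FiniteIndex] (hinv : ∀ x ∈ H, φ x ∈ H) :
    specNZ φ ⊆ specNZ (restrictHom φ H hinv) :=
  fun _ ⟨hne, h⟩ => ⟨hne, hasEigenvalue_inducedEnd_restrictHom φ H hinv h⟩

theorem restriction_has_non_root_of_unity_eigenvalue_general
    {F : Type*} [Group F] [Group.FG F] (φ : F ≃* F)
    (lam : ℂ) (hlam : lam ∈ specNZ φ.toMonoidHom) (hroot : ¬ IsRootOfUnity lam)
    (H : Subgroup F) [H.FiniteIndex] (hinv : ∀ x ∈ H, φ x ∈ H) :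
    ∃ μ : ℂ, Module.End.HasEigenvalue (inducedEnd (restrictHom φ.toMonoidHom H hinv)) μ ∧
      ¬ IsRootOfUnity μ :=
  ⟨lam, (specNZ_subset_specNZ_restrictHom φ.toMonoidHom H hinv hlam).2, hroot⟩

theorem restriction_has_non_root_of_unity_eigenvalue
    {F : Type*} [Group F] [IsFreeGroup F] [Group.FG F] (φ : F ≃* F)
    (lam : ℂ) (hlam : lam ∈ specNZ φ.toMonoidHom) (hroot : ¬ IsRootOfUnity lam)
    (H : Subgroup F) [H.FiniteIndex] (hinv : ∀ x ∈ H, φ x ∈ H) :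
    ∃ μ : ℂ, Module.End.HasEigenvalue (inducedEnd (restrictHom φ.toMonoidHom H hinv)) μ ∧
      ¬ IsRootOfUnity μ :=
  restriction_has_non_root_of_unity_eigenvalue_general φ lam hlam hroot H hinv
end

section
/- There exists an automorphism φ of a finitely generated free group F (for example, the free group of rank 2) such that for every finite-index subgroup H of F with φ(H) ⊆ H, the restriction φ|_H has an eigenvalue that is not a root of unity. This answers Casson's question negatively: it is not true that every automorphism of a finitely generated free group admits a finite-index invariant subgroup on which all eigenvalues are roots of unity. -/
open scoped TensorProduct

/-!
The automorphism `a ↦ b, b ↦ a b²` acts on `ℂ ⊗ F^ab = ℂ²` by the matrix `[[0, 1], [1, 2]]`, which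
has the eigenvalue `1 + √2`, of modulus `> 1`. For a finite-index subgroup `H`, every `g ∈ F` has a
power `gⁿ ∈ H` with `n > 0`; as `n` is invertible in `ℂ`, the inclusion induces a surjection
`ℂ ⊗ H^ab → ℂ ⊗ F^ab`. It intertwines `φ|_H` with `φ`, so every eigenvalue of `φ` is an eigenvalue
of `φ|_H`.
-/

namespace Module.End

variable {K V W : Type*} [Field K] [AddCommGroup V] [Module K V] [AddCommGroup W] [Module K W]

theorem HasEigenvalue.of_semiconj_of_surjective [FiniteDimensional K V] {A : End K V}
    {B : End K W} {q : V →ₗ[K] W} (hq : Function.Surjective q) (hc : Function.Semiconj q A B)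
    {μ : K} (hμ : B.HasEigenvalue μ) : A.HasEigenvalue μ := by
  have : FiniteDimensional K W := Module.Finite.of_surjective q hq
  contrapose! hμ
  rw [hasEigenvalue_iff, not_not, eigenspace_def, LinearMap.ker_eq_bot] at hμ ⊢
  refine LinearMap.injective_iff_surjective.mpr fun w => ?_
  obtain ⟨v, rfl⟩ := hq w
  obtain ⟨u, rfl⟩ := LinearMap.injective_iff_surjective.mp hμ v
  exact ⟨q u, by simp [hc u]⟩

/-- On `span {e₀, e₁}`, `f` acts by the companion matrix of `X² - d X - 1`; the eigenvector is
`e₀ + μ e₁`. -/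
theorem hasEigenvalue_of_apply_eq_of_apply_eq {f : End K V} {e : Fin 2 → V}
    (he : LinearIndependent K e) {d μ : K} (h₀ : f (e 0) = e 1) (h₁ : f (e 1) = e 0 + d • e 1)
    (hμ : μ ^ 2 = 1 + d * μ) : f.HasEigenvalue μ := by
  refine hasEigenvalue_of_hasEigenvector (x := e 0 + μ • e 1) ⟨mem_eigenspace_iff.mpr ?_, ?_⟩
  · rw [map_add, map_smul, h₀, h₁]
    linear_combination (norm := module) -hμ • e 1
  · intro h
    have := Fintype.linearIndependent_iff.mp he ![1, μ] (by simpa [Fin.sum_univ_two] using h) 0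
    exact one_ne_zero this

end Module.End

theorem IsRootOfUnity.norm_eq_one {z : ℂ} (hz : IsRootOfUnity z) : ‖z‖ = 1 :=
  let ⟨_, hn, hzn⟩ := hz
  Complex.norm_eq_one_of_pow_eq_one hzn hn.ne'

namespace Abelianization

variable (R : Type*) [CommRing R] {G G' G'' : Type*} [Group G] [Group G'] [Group G'']

noncomputable def baseChangeMap (f : G →* G') :
    R ⊗[ℤ] Additive (Abelianization G) →ₗ[R] R ⊗[ℤ] Additive (Abelianization G') :=
  (MonoidHom.toAdditive (map f)).toIntLinearMap.baseChange R

theorem baseChangeMap_comp (f : G →* G') (g : G' →* G'') :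
    baseChangeMap R (g.comp f) = baseChangeMap R g ∘ₗ baseChangeMap R f := by
  rw [baseChangeMap, baseChangeMap, baseChangeMap, ← LinearMap.baseChange_comp, ← map_comp]
  rfl

theorem of_surjective : Function.Surjective (of : G →* Abelianization G) :=
  fun x => QuotientGroup.induction_on x fun g => ⟨g, rfl⟩

instance [Group.FG G] : Module.Finite R (R ⊗[ℤ] Additive (Abelianization G)) :=
  have : Group.FG (Abelianization G) := Group.fg_of_surjective of_surjective
  have : Module.Finite ℤ (Additive (Abelianization G)) :=
    Module.Finite.iff_addGroup_fg.mpr inferInstance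
  inferInstance

@[simp]
theorem baseChangeMap_tmul_of (f : G →* G') (r : R) (g : G) :
    baseChangeMap R f (r ⊗ₜ Additive.ofMul (of g)) = r ⊗ₜ Additive.ofMul (of (f g)) := by
  rw [baseChangeMap, LinearMap.baseChange_tmul]
  rfl

theorem baseChangeMap_subtype_surjective (K : Type*) [Field K] [CharZero K] (H : Subgroup G)
    [H.FiniteIndex] : Function.Surjective (baseChangeMap K H.subtype) := by
  intro w
  induction w using TensorProduct.induction_on with
  | zero => exact ⟨0, map_zero _⟩
  | add x y hx hy =>
    obtain ⟨x', rfl⟩ := hx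
    obtain ⟨y', rfl⟩ := hy
    exact ⟨x' + y', map_add _ _ _⟩
  | tmul r m =>
    obtain ⟨g, hg⟩ := of_surjective (Additive.toMul m)
    obtain ⟨n, hn, -, hgn⟩ :=
      H.exists_pow_mem_of_index_ne_zero Subgroup.FiniteIndex.index_ne_zero g
    refine ⟨(n : K)⁻¹ • r ⊗ₜ Additive.ofMul (of ⟨g ^ n, hgn⟩), ?_⟩
    have hn' : (n : K) ≠ 0 := Nat.cast_ne_zero.mpr hn.ne'
    rw [map_smul, baseChangeMap_tmul_of, H.coe_subtype, map_pow, ofMul_pow,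
      TensorProduct.tmul_smul, ← Nat.cast_smul_eq_nsmul K, inv_smul_smul₀ hn', hg,
      ofMul_toMul]

end Abelianization

open Abelianization

section Restriction

variable {G : Type*} [Group G]

theorem semiconj_baseChangeMap_subtype_inducedEnd (φ : G →* G) (H : Subgroup G)
    (hinv : ∀ x ∈ H, φ x ∈ H) :
    Function.Semiconj (baseChangeMap ℂ H.subtype) (inducedEnd (restrictHom φ H hinv))
      (inducedEnd φ) := by
  have hcomp : H.subtype.comp (restrictHom φ H hinv) = φ.comp H.subtype := rfl
  intro v
  change (baseChangeMap ℂ H.subtype ∘ₗ baseChangeMap ℂ (restrictHom φ H hinv)) v =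
    (baseChangeMap ℂ φ ∘ₗ baseChangeMap ℂ H.subtype) v
  rw [← baseChangeMap_comp, ← baseChangeMap_comp, hcomp]

theorem Module.End.HasEigenvalue.inducedEnd_restrictHom [Group.FG G] {φ : G →* G}
    {μ : ℂ} (hμ : (inducedEnd φ).HasEigenvalue μ) (H : Subgroup G) [H.FiniteIndex]
    (hinv : ∀ x ∈ H, φ x ∈ H) : (inducedEnd (restrictHom φ H hinv)).HasEigenvalue μ :=
  hμ.of_semiconj_of_surjective (baseChangeMap_subtype_surjective ℂ H)
    (semiconj_baseChangeMap_subtype_inducedEnd φ H hinv)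

end Restriction

theorem FreeAbelianGroup.basis_apply {α : Type*} (i : α) :
    FreeAbelianGroup.basis α i = FreeAbelianGroup.of i := by
  rw [Module.Basis.apply_eq_iff]
  exact FreeAbelianGroup.toFinsupp_of i

namespace FreeGroup

theorem linearIndependent_one_tmul_of (R : Type*) [CommRing R] [Nontrivial R] (α : Type*) :
    LinearIndependent R fun i : α => (1 : R) ⊗ₜ[ℤ] Additive.ofMul (Abelianization.of (of i)) := by
  have hb : ⇑(Algebra.TensorProduct.basis R (FreeAbelianGroup.basis α)) =
      fun i : α => (1 : R) ⊗ₜ[ℤ] Additive.ofMul (Abelianization.of (of i)) :=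
    funext fun i => by rw [Algebra.TensorProduct.basis_apply, FreeAbelianGroup.basis_apply]; rfl
  exact hb ▸ (Algebra.TensorProduct.basis R (FreeAbelianGroup.basis α)).linearIndependent

def silverAut : FreeGroup (Fin 2) ≃* FreeGroup (Fin 2) :=
  MonoidHom.toMulEquiv (lift ![of 1, of 0 * of 1 ^ 2]) (lift ![of 1 * (of 0)⁻¹ ^ 2, of 0])
    (ext_hom _ _ fun i => by fin_cases i <;> simp)
    (ext_hom _ _ fun i => by fin_cases i <;> simp)

@[simp]
theorem silverAut_of_zero : silverAut (of 0) = of 1 := by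
  simp [silverAut]

@[simp]
theorem silverAut_of_one : silverAut (of 1) = of 0 * of 1 ^ 2 := by
  simp [silverAut]

theorem hasEigenvalue_inducedEnd_silverAut :
    (inducedEnd silverAut.toMonoidHom).HasEigenvalue ((1 + √2 : ℝ) : ℂ) := by
  refine Module.End.hasEigenvalue_of_apply_eq_of_apply_eq
    (linearIndependent_one_tmul_of ℂ (Fin 2)) (d := 2) ?_ ?_ ?_
  · change baseChangeMap ℂ _ _ = _
    rw [baseChangeMap_tmul_of, MulEquiv.coe_toMonoidHom, silverAut_of_zero]
  · change baseChangeMap ℂ _ _ = _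
    rw [baseChangeMap_tmul_of, MulEquiv.coe_toMonoidHom, silverAut_of_one,
      _root_.map_mul, _root_.map_pow, ofMul_mul, ofMul_pow, two_nsmul, two_smul,
      TensorProduct.tmul_add, TensorProduct.tmul_add]
  · have h2 : ((√2 : ℝ) : ℂ) ^ 2 = 2 := by
      rw [← Complex.ofReal_pow, Real.sq_sqrt zero_le_two, Complex.ofReal_ofNat]
    push_cast
    linear_combination h2

end FreeGroup

theorem not_isRootOfUnity_one_add_sqrt_two : ¬ IsRootOfUnity ((1 + √2 : ℝ) : ℂ) := by
  intro h
  have hnorm := h.norm_eq_one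
  rw [Complex.norm_real, Real.norm_of_nonneg (by positivity)] at hnorm
  have : 0 < √2 := by positivity
  linarith

theorem exists_automorphism_no_invariant_subgroup_all_roots_of_unity :
    ∃ φ : FreeGroup (Fin 2) ≃* FreeGroup (Fin 2),
      ∀ H : Subgroup (FreeGroup (Fin 2)), H.FiniteIndex →
        ∀ hinv : ∀ x ∈ H, φ x ∈ H,
          ∃ μ : ℂ,
            Module.End.HasEigenvalue (inducedEnd (restrictHom φ.toMonoidHom H hinv)) μ ∧
            ¬ IsRootOfUnity μ :=
  ⟨FreeGroup.silverAut, fun H _ hinv =>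
    ⟨_, FreeGroup.hasEigenvalue_inducedEnd_silverAut.inducedEnd_restrictHom H hinv,
      not_isRootOfUnity_one_add_sqrt_two⟩⟩
end
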